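/- For the non-Markovian absorbing diffusion, where each x_τ (τ = t,...,T) is independently set to the mask symbol m with probability α_τ and otherwise set equal to x_0, the conditional entropy of x_0 given the suffix satisfies H(x_0 | x_{t:T}) = (∏_{τ=t}^{T} α_τ) · H(x_0). -/

import Mathlib

open Finset

/-- Shannon entropy of a finitely supported weight function (natural log). -/
noncomputable def entropy {X : Type*} [Fintype X] (q : X → ℝ) : ℝ :=
  -∑ x, q x * Real.log (q x)

open Real

/-!
Conditioning on the suffix splits `H(x_0 | x_{t:T})` into one term per suffix value. A suffix
in which some coordinate is unmasked reveals `x_0`, so its fibre is concentrated on a single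
point and contributes nothing. The only remaining suffix is the fully masked one, whose fibre is
`p` scaled by `∏ α_τ`; it contributes `(∏ α_τ) · H(x_0)`.
-/

theorem entropy_eq_sum_negMulLog {X : Type*} [Fintype X] (q : X → ℝ) :
    entropy q = ∑ x, negMulLog (q x) := by
  simp only [entropy, negMulLog, neg_mul, sum_neg_distrib]

theorem entropy_const_mul {X : Type*} [Fintype X] (c : ℝ) (q : X → ℝ) :
    entropy (fun x => c * q x) = c * entropy q + (∑ x, q x) * negMulLog c := by
  simp only [entropy_eq_sum_negMulLog, negMulLog_mul, sum_add_distrib, mul_sum, sum_mul,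
    add_comm]

theorem entropy_sub_entropy_marginal {X W : Type*} [Fintype X] [Fintype W] (q : X × W → ℝ) :
    entropy q - entropy (fun w => ∑ x, q (x, w)) =
      ∑ w, (entropy (fun x => q (x, w)) - negMulLog (∑ x, q (x, w))) := by
  simp only [entropy_eq_sum_negMulLog, Fintype.sum_prod_type_right, sum_sub_distrib]

theorem entropy_eq_negMulLog_sum_of_eq_zero_of_ne {X : Type*} [Fintype X] {q : X → ℝ} {x₀ : X}
    (hq : ∀ x, x ≠ x₀ → q x = 0) : entropy q = negMulLog (∑ x, q x) := by
  rw [entropy_eq_sum_negMulLog, Fintype.sum_eq_single x₀ hq,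
    Fintype.sum_eq_single x₀ fun x hx => by rw [hq x hx, negMulLog_zero]]

/-- The mask symbol is `none`; `H(x_0 | x_{t:T})` is written as `H(x_0, x_{t:T}) - H(x_{t:T})`. -/
theorem nonmarkov_absorbing_conditional_entropy
    {V : Type*} [Fintype V] [DecidableEq V] (n : ℕ)
    (p : V → ℝ) (hsum : ∑ v, p v = 1)
    (α : Fin n → ℝ)
    (joint : V × (Fin n → Option V) → ℝ)
    (hjoint : ∀ v f, joint (v, f) =
      p v * ∏ i, (match f i with
        | none => α i
        | some w => if w = v then 1 - α i else 0))
    (marg : (Fin n → Option V) → ℝ)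
    (hmarg : ∀ f, marg f = ∑ v, joint (v, f)) :
    entropy joint - entropy marg = (∏ i, α i) * entropy p := by
  have hmasked : ∀ v, joint (v, fun _ => none) = (∏ i, α i) * p v := fun v => by
    rw [hjoint, mul_comm]
  have hrevealed : ∀ f i w, f i = some w → ∀ v, v ≠ w → joint (v, f) = 0 := by
    intro f i w hfi v hv
    rw [hjoint, prod_eq_zero (mem_univ i) (by rw [hfi]; exact if_neg hv.symm), mul_zero]
  rw [show marg = fun f => ∑ v, joint (v, f) from funext hmarg, entropy_sub_entropy_marginal,
    Fintype.sum_eq_single fun _ => none]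
  · simp only [hmasked, entropy_const_mul, ← mul_sum, hsum, one_mul, mul_one, add_sub_cancel_right]
  · intro f hf
    obtain ⟨i, hi⟩ := Function.ne_iff.mp hf
    obtain ⟨w, hw⟩ := Option.ne_none_iff_exists'.mp hi
    rw [entropy_eq_negMulLog_sum_of_eq_zero_of_ne (hrevealed f i w hw), sub_self]
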